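/- Let n ≥ 2 and α > 1. Suppose ∫ f^α is finite and positive and each ∫ f_(i)^α is finite and positive. Then Σ_{i=1}^n H_α(f_(i)) − n·H_α(f) ≥ Ψ(α,n), where Ψ(α,n) = (α/(1-α))·Σ_{i=1}^n log( n·C(n-1,i-1)·((i-1)/(n-1))^{i-1}·((n-i)/(n-1))^{n-i} ), with the convention 0^0 = 1. -/

import Mathlib

open MeasureTheory Real

/-- Cumulative distribution function of a density `f`. -/
noncomputable def cdfOf (f : ℝ → ℝ) (x : ℝ) : ℝ := ∫ t in Set.Iic x, f t

/-- Density of the `i`-th order statistic from a sample of size `n` with parent density `f`. -/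
noncomputable def osDen (f : ℝ → ℝ) (n i : ℕ) (x : ℝ) : ℝ :=
  (i : ℝ) * (n.choose i : ℝ) * (cdfOf f x) ^ (i - 1) * (1 - cdfOf f x) ^ (n - i) * f x

/-- Rényi entropy of order `α` of a density `g`: `H_α(g) = (1/(1-α))·log ∫ g^α`. -/
noncomputable def renyiH (α : ℝ) (g : ℝ → ℝ) : ℝ :=
  (1 / (1 - α)) * Real.log (∫ x, g x ^ α)

/-- `Ψ(α,n) = (α/(1-α))·Σ_{i=1}^n log(n·C(n-1,i-1)·((i-1)/(n-1))^(i-1)·((n-i)/(n-1))^(n-i))`,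
with the convention `0^0 = 1` (natural number exponents). -/
noncomputable def Psi (α : ℝ) (n : ℕ) : ℝ :=
  (α / (1 - α)) * ∑ i ∈ Finset.Icc 1 n,
    Real.log ((n : ℝ) * ((n - 1).choose (i - 1) : ℝ)
      * (((i : ℝ) - 1) / ((n : ℝ) - 1)) ^ (i - 1)
      * (((n : ℝ) - (i : ℝ)) / ((n : ℝ) - 1)) ^ (n - i))

/-!
Since `i C(n,i) = n C(n-1,i-1)` and `t ^ (i-1) (1-t) ^ (n-i)` is maximal on `[0,1]` at
`t = (i-1)/(n-1)`, the order-statistic density satisfies `f_(i) ≤ M_i f` pointwise, where `M_i` is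
the `i`-th argument of the logarithms in `Ψ`. Hence `∫ f_(i)^α ≤ M_i^α ∫ f^α`; taking logarithms
and multiplying by `1/(1-α) < 0` gives `H_α(f_(i)) ≥ α/(1-α) log M_i + H_α(f)`, and summing over
`i` gives the theorem.
-/

theorem pow_mul_one_sub_pow_le (a b : ℕ) {p : ℝ} (hp₀ : 0 ≤ p) (hp₁ : p ≤ 1) :
    p ^ a * (1 - p) ^ b ≤ ((a : ℝ) / (a + b)) ^ a * ((b : ℝ) / (a + b)) ^ b := by
  rcases Nat.eq_zero_or_pos a with rfl | ha
  · rcases Nat.eq_zero_or_pos b with rfl | hb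
    · simp
    · have hb' : (b : ℝ) ≠ 0 := by positivity
      simpa [div_self hb'] using pow_le_one₀ (sub_nonneg.2 hp₁) (by linarith)
  rcases Nat.eq_zero_or_pos b with rfl | hb
  · have ha' : (a : ℝ) ≠ 0 := by positivity
    simpa [div_self ha'] using pow_le_one₀ hp₀ hp₁
  set s : ℝ := a + b
  have hs : 0 < s := by positivity
  set x : ℝ := a / s
  set y : ℝ := b / s
  have hx : 0 < x := by positivity
  have hy : 0 < y := by positivity
  have hxy : x + y = 1 := by rw [← add_div, div_self hs.ne']
  have amgm : (p / x) ^ x * ((1 - p) / y) ^ y ≤ 1 := by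
    simpa [mul_div_cancel₀ _ hx.ne', mul_div_cancel₀ _ hy.ne'] using
      geom_mean_le_arith_mean2_weighted hx.le hy.le (div_nonneg hp₀ hx.le)
        (div_nonneg (sub_nonneg.2 hp₁) hy.le) hxy
  have amgm_pow : (p / x) ^ a * ((1 - p) / y) ^ b ≤ 1 := by
    have h := rpow_le_one (by positivity) amgm hs.le
    rwa [mul_rpow (by positivity) (by positivity), ← rpow_mul (by positivity),
      ← rpow_mul (by positivity), div_mul_cancel₀ _ hs.ne', div_mul_cancel₀ _ hs.ne',
      rpow_natCast, rpow_natCast] at h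
  calc p ^ a * (1 - p) ^ b = (p / x) ^ a * ((1 - p) / y) ^ b * (x ^ a * y ^ b) := by
        rw [mul_mul_mul_comm, ← mul_pow, ← mul_pow, div_mul_cancel₀ _ hx.ne',
          div_mul_cancel₀ _ hy.ne']
    _ ≤ x ^ a * y ^ b := mul_le_of_le_one_left (by positivity) amgm_pow

theorem integral_rpow_le_of_le_const_mul {Ω : Type*} [MeasurableSpace Ω] {μ : Measure Ω}
    {g h : Ω → ℝ} {c α : ℝ} (hα : 0 ≤ α) (hc : 0 ≤ c) (hg : ∀ x, 0 ≤ g x) (hh : ∀ x, 0 ≤ h x)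
    (hgh : ∀ x, g x ≤ c * h x) (hgi : Integrable (fun x => g x ^ α) μ)
    (hhi : Integrable (fun x => h x ^ α) μ) :
    ∫ x, g x ^ α ∂μ ≤ c ^ α * ∫ x, h x ^ α ∂μ := by
  rw [← integral_const_mul]
  refine integral_mono hgi (hhi.const_mul _) fun x => ?_
  rw [← mul_rpow hc (hh x)]
  exact rpow_le_rpow (hg x) (hgh x) hα

theorem renyiH_ge_of_le_const_mul {g h : ℝ → ℝ} {c α : ℝ} (hα : 1 < α) (hc : 0 < c)
    (hg : ∀ x, 0 ≤ g x) (hh : ∀ x, 0 ≤ h x) (hgh : ∀ x, g x ≤ c * h x)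
    (hgi : Integrable fun x => g x ^ α) (hhi : Integrable fun x => h x ^ α)
    (hgp : 0 < ∫ x, g x ^ α) (hhp : 0 < ∫ x, h x ^ α) :
    α / (1 - α) * log c + renyiH α h ≤ renyiH α g := by
  have hlog : log (∫ x, g x ^ α) ≤ α * log c + log (∫ x, h x ^ α) := by
    rw [← log_rpow hc, ← log_mul (rpow_pos_of_pos hc α).ne' hhp.ne']
    exact log_le_log hgp
      (integral_rpow_le_of_le_const_mul (by linarith) hc.le hg hh hgh hgi hhi)
  have hneg : 1 / (1 - α) ≤ 0 := div_nonpos_of_nonneg_of_nonpos zero_le_one (by linarith)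
  calc α / (1 - α) * log c + renyiH α h
      = 1 / (1 - α) * (α * log c + log (∫ x, h x ^ α)) := by unfold renyiH; ring
    _ ≤ renyiH α g := mul_le_mul_of_nonpos_left hlog hneg

section OrderStatistics

variable {f : ℝ → ℝ}

theorem cdfOf_nonneg (hf : ∀ x, 0 ≤ f x) (x : ℝ) : 0 ≤ cdfOf f x :=
  setIntegral_nonneg measurableSet_Iic fun t _ => hf t

theorem cdfOf_le_one (hf : ∀ x, 0 ≤ f x) (hf_int : ∫ x, f x = 1) (x : ℝ) : cdfOf f x ≤ 1 :=
  hf_int ▸ setIntegral_le_integral (.of_integral_ne_zero (by simp [hf_int]))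
    (.of_forall hf)

theorem osDen_nonneg (hf : ∀ x, 0 ≤ f x) (hf_int : ∫ x, f x = 1) (n i : ℕ) (x : ℝ) :
    0 ≤ osDen f n i x := by
  have := cdfOf_nonneg hf x
  have := sub_nonneg.2 (cdfOf_le_one hf hf_int x)
  have := hf x
  unfold osDen
  positivity

/-- The maximum over `t ∈ [0,1]` of `n C(n-1,i-1) t^(i-1) (1-t)^(n-i)`, attained at
`t = (i-1)/(n-1)`. -/
noncomputable def osDenBound (n i : ℕ) : ℝ :=
  (n : ℝ) * ((n - 1).choose (i - 1) : ℝ)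
    * (((i : ℝ) - 1) / ((n : ℝ) - 1)) ^ (i - 1)
    * (((n : ℝ) - (i : ℝ)) / ((n : ℝ) - 1)) ^ (n - i)

theorem Psi_eq_sum_log_osDenBound (α : ℝ) (n : ℕ) :
    Psi α n = α / (1 - α) * ∑ i ∈ Finset.Icc 1 n, log (osDenBound n i) :=
  rfl

theorem osDenBound_pos {n i : ℕ} (hi : 1 ≤ i) (hin : i ≤ n) : 0 < osDenBound n i := by
  have hn : (0 : ℝ) < n := by exact_mod_cast hi.trans_lt' zero_lt_one |>.trans_le hin
  have hi' : (1 : ℝ) ≤ i := by exact_mod_cast hi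
  have hin' : (i : ℝ) ≤ n := by exact_mod_cast hin
  have hchoose : 0 < ((n - 1).choose (i - 1) : ℝ) := by
    exact_mod_cast Nat.choose_pos (by omega)
  have hleft : 0 < (((i : ℝ) - 1) / ((n : ℝ) - 1)) ^ (i - 1) := by
    rcases hi.eq_or_lt with rfl | hi
    · simp
    · have : (1 : ℝ) < i := by exact_mod_cast hi
      exact pow_pos (div_pos (by linarith) (by linarith)) _
  have hright : 0 < (((n : ℝ) - i) / ((n : ℝ) - 1)) ^ (n - i) := by
    rcases hin.eq_or_lt with rfl | hin
    · simp
    · have : (i : ℝ) < n := by exact_mod_cast hin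
      exact pow_pos (div_pos (by linarith) (by linarith)) _
  unfold osDenBound
  positivity

theorem osDen_le_osDenBound_mul (hf : ∀ x, 0 ≤ f x) (hf_int : ∫ x, f x = 1) {n i : ℕ}
    (hi : 1 ≤ i) (hin : i ≤ n) (x : ℝ) : osDen f n i x ≤ osDenBound n i * f x := by
  have hchoose : (i : ℝ) * n.choose i = n * (n - 1).choose (i - 1) := by
    obtain ⟨k, rfl⟩ := Nat.exists_eq_add_of_le' hi
    obtain ⟨m, rfl⟩ := Nat.exists_eq_add_of_le' (hi.trans hin)
    rw [Nat.add_sub_cancel, Nat.add_sub_cancel]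
    exact_mod_cast (mul_comm _ _).trans (Nat.add_one_mul_choose_eq m k).symm
  have hmax := pow_mul_one_sub_pow_le (i - 1) (n - i) (cdfOf_nonneg hf x)
    (cdfOf_le_one hf hf_int x)
  rw [Nat.cast_sub hi, Nat.cast_sub hin, Nat.cast_one,
    show (i : ℝ) - 1 + (n - i) = n - 1 by ring] at hmax
  calc osDen f n i x
      = (i * n.choose i) * (cdfOf f x ^ (i - 1) * (1 - cdfOf f x) ^ (n - i)) * f x := by
        unfold osDen; ring
    _ ≤ (i * n.choose i) * ((((i : ℝ) - 1) / ((n : ℝ) - 1)) ^ (i - 1)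
          * (((n : ℝ) - i) / ((n : ℝ) - 1)) ^ (n - i)) * f x := by gcongr; exact hf x
    _ = osDenBound n i * f x := by rw [hchoose, osDenBound]; ring

end OrderStatistics

theorem renyi_RSS_minus_SRS_ge_Psi_general (n : ℕ) (α : ℝ) (hα : 1 < α)
    (f : ℝ → ℝ)
    (hf_nonneg : ∀ x, 0 ≤ f x)
    (hf_int : ∫ x, f x = 1)
    (hfi : Integrable (fun x => f x ^ α)) (hfp : 0 < ∫ x, f x ^ α)
    (hoi : ∀ i ∈ Finset.Icc 1 n, Integrable (fun x => osDen f n i x ^ α))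
    (hop : ∀ i ∈ Finset.Icc 1 n, 0 < ∫ x, osDen f n i x ^ α) :
    Psi α n ≤ (∑ i ∈ Finset.Icc 1 n, renyiH α (osDen f n i)) - (n : ℝ) * renyiH α f := by
  have hterm : ∀ i ∈ Finset.Icc 1 n,
      α / (1 - α) * log (osDenBound n i) + renyiH α f ≤ renyiH α (osDen f n i) := by
    intro i hi
    obtain ⟨hi1, hin⟩ := Finset.mem_Icc.1 hi
    exact renyiH_ge_of_le_const_mul hα (osDenBound_pos hi1 hin)
      (osDen_nonneg hf_nonneg hf_int n i) hf_nonneg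
      (osDen_le_osDenBound_mul hf_nonneg hf_int hi1 hin) (hoi i hi) hfi (hop i hi) hfp
  have hsum := Finset.sum_le_sum hterm
  rw [Finset.sum_add_distrib, ← Finset.mul_sum, Finset.sum_const, Nat.card_Icc,
    Nat.add_sub_cancel, nsmul_eq_mul] at hsum
  rw [Psi_eq_sum_log_osDenBound]
  linarith

/-- For `n ≥ 2` and `α > 1`, the difference between the Rényi entropies of a perfect RSS and
an SRS of size `n` is at least `Ψ(α,n)`. -/
theorem renyi_RSS_minus_SRS_ge_Psi (n : ℕ) (hn : 2 ≤ n) (α : ℝ) (hα : 1 < α)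
    (f : ℝ → ℝ)
    (hf_meas : Measurable f) (hf_nonneg : ∀ x, 0 ≤ f x)
    (hf_int : ∫ x, f x = 1)
    (hfi : Integrable (fun x => f x ^ α)) (hfp : 0 < ∫ x, f x ^ α)
    (hoi : ∀ i ∈ Finset.Icc 1 n, Integrable (fun x => osDen f n i x ^ α))
    (hop : ∀ i ∈ Finset.Icc 1 n, 0 < ∫ x, osDen f n i x ^ α) :
    Psi α n ≤ (∑ i ∈ Finset.Icc 1 n, renyiH α (osDen f n i)) - (n : ℝ) * renyiH α f :=
  renyi_RSS_minus_SRS_ge_Psi_general n α hα f hf_nonneg hf_int hfi hfp hoi hop
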